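/- With 𝓙ₒ[f](X) := ∫₀^X e^{-is-qπ} s^{p+1} f(s) ds and C̃ⱼ as above, the integral identity 𝓙ₒ[C̃₁^{(p,2q,2)}](X) + p(p+2)·𝓙ₒ[C̃₀^{(p,2q,2)}](X) = p·X·(d/dX)𝓙ₒ[C̃₀^{(p,2q,2)}](X) = p·e^{-iX-qπ} X^{p+2} C̃₀^{(p,2q,2)}(X) holds for all X ≥ 0. -/

import Mathlib

/-!
Put `G(t) = p e^{-it-qπ} t^{p+2} C̃₀(t)`. Since `C̃₁ = -ipt C̃₀ + pt C̃₀'`, the product rule gives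
`G'(t) = e^{-it-qπ} t^{p+1} (C̃₁(t) + p(p+2) C̃₀(t))`, so by the fundamental theorem of calculus the
left-hand side is `G(X) - G(0) = G(X)` (here `p + 2 > 0` makes `G(0) = 0` and the weight `t^{p+1}`
integrable at `0`). The middle term is `G(X)` as well, because `(d/dX)𝓙ₒ[C̃₀](X)` is the integrand
at `X`. The smoothness of `C̃₀` comes from writing `₁F₁(a; c; z)` as `Γ(c)` times Mathlib's entire
regularized hypergeometric function.
-/

open Complex intervalIntegral
open scoped Real

/-- Rising factorial (Pochhammer symbol) for a complex argument. -/
noncomputable def poch (x : ℂ) (n : ℕ) : ℂ := ∏ i ∈ Finset.range n, (x + i)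

/-- Kummer confluent hypergeometric series. -/
noncomputable def oneF1 (a c z : ℂ) : ℂ :=
  ∑' n : ℕ, poch a n / (poch c n * (n.factorial : ℂ)) * z ^ n

/-- `C̃₀^{(p,2q,2)}(X) = ₁F₁(p+2-2iq; 2p+4; 2iX)`. -/
noncomputable def C0 (p q : ℝ) (X : ℝ) : ℂ :=
  oneF1 ((p : ℂ) + 2 - 2 * q * I) (2 * p + 4) (2 * I * X)

/-- `C̃₁^{(p,2q,2)}(X) = -ipX C̃₀^{(p,2q,2)}(X) + pX (d/dX) C̃₀^{(p,2q,2)}(X)`. -/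
noncomputable def C1 (p q : ℝ) (X : ℝ) : ℂ :=
  -I * p * X * C0 p q X + p * X * deriv (fun Y : ℝ => C0 p q Y) X

/-- The integral operator `𝓙ₒ[f](X) = ∫₀^X e^{-is-qπ} s^{p+1} f(s) ds`. -/
noncomputable def Jo (p q : ℝ) (f : ℝ → ℂ) (X : ℝ) : ℂ :=
  ∫ s in (0 : ℝ)..X, Complex.exp (-I * s - q * π) * ((s ^ (p + 1) : ℝ) : ℂ) * f s

lemma poch_eq_ascPochhammer_eval (x : ℂ) (n : ℕ) : poch x n = (ascPochhammer ℂ n).eval x := by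
  induction n with
  | zero => simp [poch]
  | succ n ih =>
    rw [poch, Finset.prod_range_succ, ← poch, ih, ascPochhammer_succ_right]
    simp

lemma oneF1_eq_Gamma_mul_regularizedHGFun {c : ℂ} (hc : ∀ k : ℕ, c ≠ -k) (a z : ℂ) :
    oneF1 a c z = Gamma c * regularizedHGFun {a} {c} z := by
  rw [regularizedHGFun, regularizedHGFunSeries, ← FormalMultilinearSeries.ofScalarsSum,
    FormalMultilinearSeries.ofScalars_sum_eq, ← tsum_mul_left, oneF1]
  congr 1 with n
  have hΓ := Gamma_ne_zero hc
  have hΓn : Gamma (c + n) = Gamma c * poch c n := by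
    rw [poch_eq_ascPochhammer_eval, ← Gamma_add_nat_div_Gamma_eq c hc]
    field_simp
  simp only [regularizedHGFunCoeff, Multiset.map_singleton, Multiset.prod_singleton, hΓn,
    ← poch_eq_ascPochhammer_eval, smul_eq_mul]
  field_simp

lemma differentiable_regularizedHGFun {a b : Multiset ℂ} (h : a.card ≤ b.card) :
    Differentiable ℂ (regularizedHGFun a b) := by
  have hr := radius_regularizedHGFunSeries_eq_top h
  have hball := (regularizedHGFunSeries a b).hasFPowerSeriesOnBall (by simp [hr])
  rw [hr] at hball
  exact fun z => (hball.analyticAt_of_mem (by simp)).differentiableAt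

lemma differentiable_oneF1 {c : ℂ} (hc : ∀ k : ℕ, c ≠ -k) (a : ℂ) :
    Differentiable ℂ (oneF1 a c) := by
  rw [funext (oneF1_eq_Gamma_mul_regularizedHGFun hc a)]
  exact (differentiable_regularizedHGFun (by simp)).const_mul _

lemma ne_neg_natCast_of_re_pos {c : ℂ} (hc : 0 < c.re) (k : ℕ) : c ≠ -k := by
  rintro rfl
  simp only [neg_re, natCast_re, Left.neg_pos_iff] at hc
  linarith [k.cast_nonneg (α := ℝ)]

lemma ofReal_rpow_add_two {x : ℝ} (hx : 0 < x) (p : ℝ) :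
    ((x ^ (p + 2) : ℝ) : ℂ) = ((x ^ (p + 1) : ℝ) : ℂ) * x := by
  rw [show p + 2 = p + 1 + 1 by ring, Real.rpow_add_one hx.ne', ofReal_mul]

section

variable {p : ℝ} (hp : -2 < p) (q : ℝ)
include hp

lemma contDiff_C0 : ContDiff ℝ 1 (C0 p q) := by
  have hc : ∀ k : ℕ, (2 * p + 4 : ℂ) ≠ -k :=
    ne_neg_natCast_of_re_pos (by
      simp only [add_re, mul_re, re_ofNat, ofReal_re, im_ofNat, ofReal_im, mul_zero, sub_zero]
      linarith)
  exact ((differentiable_oneF1 hc _).contDiff.restrict_scalars ℝ).comp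
    (contDiff_const.mul ofRealCLM.contDiff)

lemma continuous_C1 : Continuous (C1 p q) := by
  have hC0 := contDiff_C0 hp q
  have h0 := hC0.continuous
  have h1 := hC0.continuous_deriv_one
  unfold C1
  fun_prop

lemma intervalIntegrable_Jo_integrand {f : ℝ → ℂ} (hf : Continuous f) (X : ℝ) :
    IntervalIntegrable (fun s : ℝ => exp (-I * s - q * π) * ((s ^ (p + 1) : ℝ) : ℂ) * f s)
      MeasureTheory.volume 0 X := by
  have hrpow := intervalIntegrable_rpow' (a := 0) (b := X) (r := p + 1) (by linarith)
  have hrpow' : IntervalIntegrable (fun s : ℝ => ((s ^ (p + 1) : ℝ) : ℂ))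
      MeasureTheory.volume 0 X := ⟨hrpow.1.ofReal, hrpow.2.ofReal⟩
  exact (hrpow'.continuousOn_mul (by fun_prop)).mul_continuousOn hf.continuousOn

lemma Jo_add_const_mul {f g : ℝ → ℂ} (hf : Continuous f) (hg : Continuous g) (c : ℂ) (X : ℝ) :
    Jo p q f X + c * Jo p q g X = Jo p q (fun s => f s + c * g s) X := by
  rw [Jo, Jo, Jo, ← integral_const_mul, ← integral_add
    (intervalIntegrable_Jo_integrand hp q hf X)
    ((intervalIntegrable_Jo_integrand hp q hg X).const_mul c)]
  congr 1 with s
  ring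

lemma hasDerivAt_Jo {f : ℝ → ℂ} (hf : Continuous f) {X : ℝ} (hX : 0 < X) :
    HasDerivAt (Jo p q f) (exp (-I * X - q * π) * ((X ^ (p + 1) : ℝ) : ℂ) * f X) X := by
  have hmeas := hf.measurable
  refine integral_hasDerivAt_right (intervalIntegrable_Jo_integrand hp q hf X) ?_ ?_
  · exact (by fun_prop : Measurable _).aestronglyMeasurable.stronglyMeasurableAtFilter
  · have := Real.continuousAt_rpow_const X (p + 1) (Or.inl hX.ne')
    fun_prop

lemma hasDerivAt_exp_rpow_C0 {s : ℝ} (hs : 0 < s) :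
    HasDerivAt (fun t : ℝ => p * exp (-I * t - q * π) * ((t ^ (p + 2) : ℝ) : ℂ) * C0 p q t)
      (exp (-I * s - q * π) * ((s ^ (p + 1) : ℝ) : ℂ) * (C1 p q s + p * (p + 2) * C0 p q s))
      s := by
  have hexp : HasDerivAt (fun t : ℝ => exp (-I * t - q * π)) (exp (-I * s - q * π) * -I) s := by
    simpa using (((hasDerivAt_id (s : ℂ)).const_mul (-I)).sub_const ((q : ℂ) * π)).cexp
      |>.comp_ofReal
  have hrpow : HasDerivAt (fun t : ℝ => ((t ^ (p + 2) : ℝ) : ℂ))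
      (((p + 2) * s ^ (p + 1) : ℝ) : ℂ) s := by
    simpa [show p + 2 - 1 = p + 1 by ring] using
      (Real.hasDerivAt_rpow_const (p := p + 2) (Or.inl hs.ne')).ofReal_comp
  have hC0 : HasDerivAt (C0 p q) (deriv (fun Y : ℝ => C0 p q Y) s) s :=
    ((contDiff_C0 hp q).differentiable one_ne_zero s).hasDerivAt
  refine (((hexp.const_mul (p : ℂ)).mul hrpow).mul hC0).congr_deriv ?_
  simp only [Pi.mul_apply]
  rw [C1, ofReal_rpow_add_two hs]
  push_cast
  ring

lemma Jo_C1_add_mul_Jo_C0 {X : ℝ} (hX : 0 ≤ X) :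
    Jo p q (C1 p q) X + p * (p + 2) * Jo p q (C0 p q) X
      = p * exp (-I * X - q * π) * ((X ^ (p + 2) : ℝ) : ℂ) * C0 p q X := by
  have hC0 := (contDiff_C0 hp q).continuous
  have hC1 := continuous_C1 hp q
  rw [Jo_add_const_mul hp q hC1 hC0, Jo, integral_eq_sub_of_hasDerivAt_of_le hX ?_
    (fun s hs => hasDerivAt_exp_rpow_C0 hp q hs.1) ?_]
  · rw [Real.zero_rpow (by linarith : 0 < p + 2).ne', ofReal_zero, mul_zero, zero_mul, sub_zero]
  · have hrpow := Real.continuous_rpow_const (by linarith : 0 ≤ p + 2)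
    fun_prop
  · exact intervalIntegrable_Jo_integrand hp q (hC1.add (continuous_const.mul hC0)) X

lemma mul_deriv_Jo_C0 {X : ℝ} (hX : 0 ≤ X) :
    p * X * deriv (fun Y : ℝ => Jo p q (C0 p q) Y) X
      = p * exp (-I * X - q * π) * ((X ^ (p + 2) : ℝ) : ℂ) * C0 p q X := by
  rcases hX.eq_or_lt with rfl | hX
  · simp [Real.zero_rpow (by linarith : 0 < p + 2).ne']
  · rw [(hasDerivAt_Jo hp q (contDiff_C0 hp q).continuous hX).deriv, ofReal_rpow_add_two hX]
    ring

end

/-- The integral identity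
`𝓙ₒ[C̃₁](X) + p(p+2) 𝓙ₒ[C̃₀](X) = pX (d/dX)𝓙ₒ[C̃₀](X) = p e^{-iX-qπ} X^{p+2} C̃₀(X)`. -/
theorem Jo_identity (p q : ℝ) (hp : -2 < p) (X : ℝ) (hX : 0 ≤ X) :
    Jo p q (C1 p q) X + p * (p + 2) * Jo p q (C0 p q) X
        = p * X * deriv (fun Y : ℝ => Jo p q (C0 p q) Y) X
      ∧ p * X * deriv (fun Y : ℝ => Jo p q (C0 p q) Y) X
        = p * Complex.exp (-I * X - q * π) * ((X ^ (p + 2) : ℝ) : ℂ) * C0 p q X :=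
  ⟨(Jo_C1_add_mul_Jo_C0 hp q hX).trans (mul_deriv_Jo_C0 hp q hX).symm, mul_deriv_Jo_C0 hp q hX⟩
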